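/- arXiv:1609.06003 — 4 statements merged into one kernel-verified Lean document; each statement's English description precedes it below -/
import Mathlib

section
/- Every badly approximable interval exchange transformation with irreducible permutation is linearly recurrent: if c = min over discontinuities p,q of T of inf{ n·|q - T^n(p)| : n ∈ ℕ } is positive, then inf{ n·ε_n : n ∈ ℕ } > 0. -/
/-!
Let `u < v` be adjacent points of the level-`n` partition and `δ = v - u`. No image of `(u, v)`
under `T, …, T^n` meets a discontinuity, so `T^k` translates `[u, v)` for `k ≤ n + 1`. Each
endpoint reaches a discontinuity within `n` steps, unless `u = 0 = T r₀` or `v = 1`. Follow the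
right endpoint `T^k u + δ` of the `k`-th image: it moves with `T` until it meets a discontinuity
or `1`, and is then sent to `1` or to a discontinuity of `T⁻¹`, i.e. to `T r` or `T^[2] r` for
a discontinuity `r`. Comparing the two endpoints at the right time yields a discontinuity at
distance `δ` from a point that is `1`, a discontinuity, or `T^[e] r` with `1 ≤ e ≤ n + 1`.
Hence `δ ≥ min λᵢ` or `(n + 1) δ ≥ c`, and `n ε_n ≥ min (c / 2) (min λᵢ)`.
-/

open Finset

def orbitUpTo {α : Type*} (T : α → α) (D : Set α) (m : ℕ) : Set α :=
  ⋃ e ∈ Set.Icc 1 m, T^[e] '' D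

section orbitUpTo

variable {α : Type*} {T : α → α} {D : Set α}

theorem iterate_mem_orbitUpTo {r : α} (hr : r ∈ D) {e m : ℕ} (he : 1 ≤ e) (hem : e ≤ m) :
    T^[e] r ∈ orbitUpTo T D m :=
  Set.mem_biUnion ⟨he, hem⟩ (Set.mem_image_of_mem _ hr)

theorem orbitUpTo_mono : Monotone (orbitUpTo T D) := fun _ _ hm =>
  Set.biUnion_subset_biUnion_left (Set.Icc_subset_Icc le_rfl hm)

theorem mapsTo_orbitUpTo (m : ℕ) : Set.MapsTo T (orbitUpTo T D m) (orbitUpTo T D (m + 1)) := by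
  simp only [orbitUpTo, Set.MapsTo, Set.mem_iUnion, Set.mem_image]
  rintro _ ⟨e, ⟨he1, hem⟩, r, hr, rfl⟩
  exact ⟨e + 1, ⟨by omega, by omega⟩, r, hr, Function.iterate_succ_apply' T e r⟩

theorem mem_union_orbitUpTo_of_step {E : Set α} {R : ℕ → α} {b m : ℕ} (hb : R b ∈ E)
    (hE : ∀ k, b ≤ k → k < m → R k ∈ E → R (k + 1) ∈ E ∪ orbitUpTo T D 2)
    (hT : ∀ k, b ≤ k → k < m → R k ∉ E → R (k + 1) = T (R k)) :
    ∀ k, b ≤ k → k ≤ m → R k ∈ E ∪ orbitUpTo T D (k - b + 1) := by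
  intro k hbk
  induction k, hbk using Nat.le_induction with
  | base => exact fun _ => Or.inl hb
  | succ k hbk ih =>
    intro hkm
    by_cases hRk : R k ∈ E
    · exact Set.union_subset_union_right _ (orbitUpTo_mono (by omega)) (hE k hbk (by omega) hRk)
    · have hR := (ih (by omega)).resolve_left hRk
      rw [hT k hbk (by omega) hRk, show k + 1 - b + 1 = k - b + 1 + 1 by omega]
      exact Or.inr (mapsTo_orbitUpTo _ hR)

end orbitUpTo

theorem image_iterate_eq_inter_preimage {α : Type*} {S T : α → α} {s D : Set α}
    (h : Set.InvOn S T s s) (hT : Set.MapsTo T s s) (hS : Set.MapsTo S s s) (hD : D ⊆ s) :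
    ∀ k : ℕ, S^[k] '' D = s ∩ T^[k] ⁻¹' D
  | 0 => by simpa using hD
  | k + 1 => by
    rw [Function.iterate_succ', Set.image_comp, image_iterate_eq_inter_preimage h hT hS hD k,
      Set.inter_comm, h.2.image_inter', (h.symm.bijOn hS hT).image_eq, Function.iterate_succ,
      Set.preimage_comp, Set.inter_comm]

theorem image_Ico_of_translate {f : ℝ → ℝ} {u v : ℝ}
    (hf : ∀ y ∈ Set.Ico u v, f y = f u + (y - u)) :
    f '' Set.Ico u v = Set.Ico (f u) (f u + (v - u)) := by
  rw [Set.image_congr hf, show (fun y => f u + (y - u)) = (· + (f u - u)) by ext; ring,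
    Set.image_add_const_Ico]
  congr 1 <;> ring

theorem le_sInf_sub_of_adjacent {P : Set ℝ} (hP : P.Finite) {x₀ y₀ : ℝ} (hx₀ : x₀ ∈ P)
    (hy₀ : y₀ ∈ P) (hxy₀ : x₀ < y₀) {g : ℝ}
    (h : ∀ x ∈ P, ∀ y ∈ P, x < y → Disjoint P (Set.Ioo x y) → g ≤ y - x) :
    g ≤ sInf {t | ∃ x ∈ P, ∃ y ∈ P, x < y ∧ t = y - x} := by
  refine le_csInf ⟨_, x₀, hx₀, y₀, hy₀, hxy₀, rfl⟩ ?_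
  rintro _ ⟨x, hx, y, hy, hxy, rfl⟩
  obtain ⟨z, ⟨hzP, hxz, hzy⟩, hzmin⟩ :=
    Set.exists_min_image _ id (hP.inter_of_left (Set.Ioc x y)) ⟨y, hy, hxy, le_rfl⟩
  have hgap : Disjoint P (Set.Ioo x z) := Set.disjoint_right.2 fun w hw hwP =>
    (hzmin w ⟨hwP, hw.1, hw.2.le.trans hzy⟩).not_gt hw.2
  linarith [h x hx z hzP hxz hgap]

theorem min_le_mul_min {c m : ℝ} (hc : 0 ≤ c) (hm : 0 ≤ m) {n : ℕ} (hn : 1 ≤ n) :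
    min (c / 2) m ≤ n * min (c / (n + 1)) m := by
  have hn' : (1 : ℝ) ≤ n := by exact_mod_cast hn
  rw [mul_min_of_nonneg _ _ (by positivity)]
  refine min_le_min ?_ (by nlinarith)
  rw [mul_div_assoc', div_le_div_iff₀ two_pos (by positivity)]
  nlinarith

namespace IntervalExchange

variable {d : ℕ}

def cumLength (lam : Fin d → ℝ) (k : ℕ) : ℝ :=
  ∑ j ∈ univ.filter (fun j : Fin d => (j : ℕ) < k), lam j

section cumLength

variable {lam : Fin d → ℝ}

@[simp]
theorem cumLength_zero : cumLength lam 0 = 0 := by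
  simp [cumLength]

theorem cumLength_of_le {k : ℕ} (hk : d ≤ k) : cumLength lam k = ∑ i, lam i := by
  rw [cumLength, filter_true_of_mem fun j _ => j.isLt.trans_le hk]

theorem cumLength_succ (i : Fin d) : cumLength lam (i + 1) = cumLength lam i + lam i := by
  have : univ.filter (fun j : Fin d => (j : ℕ) < i + 1) =
      insert i (univ.filter (fun j : Fin d => (j : ℕ) < i)) := by
    ext j; simp [Fin.ext_iff]; omega
  rw [cumLength, this, sum_insert (by simp), add_comm, cumLength]

theorem sum_filter_lt_eq_cumLength (i : Fin d) :
    ∑ j ∈ univ.filter (fun j => j < i), lam j = cumLength lam i := rfl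

theorem sum_filter_perm_lt_eq_cumLength (π : Equiv.Perm (Fin d)) (i : Fin d) :
    ∑ j ∈ univ.filter (fun j => π j < π i), lam j = cumLength (lam ∘ π.symm) (π i) := by
  exact sum_equiv π (fun j => by simp) fun j _ => by simp

theorem cumLength_mono (hlam : ∀ i, 0 ≤ lam i) : Monotone (cumLength lam) :=
  fun _ _ hjk => sum_le_sum_of_subset_of_nonneg
    (monotone_filter_right _ fun _ _ h => h.trans_le hjk) fun i _ _ => hlam i

theorem exists_mem_Ico_cumLength {x : ℝ} (hx0 : 0 ≤ x) (hx : x < ∑ i, lam i) :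
    ∃ i : Fin d, x ∈ Set.Ico (cumLength lam i) (cumLength lam (i + 1)) := by
  have hex : ∃ k, x < cumLength lam k := ⟨d, by rwa [cumLength_of_le le_rfl]⟩
  have hk0 : Nat.find hex ≠ 0 := fun h => by
    have := Nat.find_spec hex; rw [h, cumLength_zero] at this; linarith
  have hkd : Nat.find hex ≤ d := Nat.find_min' hex (by rwa [cumLength_of_le le_rfl])
  refine ⟨⟨Nat.find hex - 1, by omega⟩, not_lt.1 (Nat.find_min hex (by simp; omega)), ?_⟩
  simpa [Nat.sub_add_cancel (Nat.one_le_iff_ne_zero.2 hk0)] using Nat.find_spec hex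

theorem cumLength_nonneg (hlam : ∀ i, 0 ≤ lam i) (k : ℕ) : 0 ≤ cumLength lam k :=
  sum_nonneg fun i _ => hlam i

theorem cumLength_le_sum (hlam : ∀ i, 0 ≤ lam i) (k : ℕ) : cumLength lam k ≤ ∑ i, lam i :=
  sum_le_sum_of_subset_of_nonneg (filter_subset _ _) fun i _ _ => hlam i

theorem cumLength_add_le {m : ℝ} (hm : ∀ i, m ≤ lam i) (hlam : ∀ i, 0 ≤ lam i) {j k : ℕ}
    (hjk : j < k) (hj : j < d) : cumLength lam j + m ≤ cumLength lam k := by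
  calc cumLength lam j + m ≤ cumLength lam (j + 1) := by
        simpa using (cumLength_succ (lam := lam) ⟨j, hj⟩).ge.trans' (by gcongr; exact hm _)
    _ ≤ cumLength lam k := cumLength_mono hlam hjk

theorem le_abs_cumLength_sub {m : ℝ} (hm : ∀ i, m ≤ lam i) (hlam : ∀ i, 0 ≤ lam i)
    {j k : ℕ} (hj : j ≤ d) (hk : k ≤ d) (hjk : j ≠ k) :
    m ≤ |cumLength lam k - cumLength lam j| := by
  rcases hjk.lt_or_gt with h | h
  · exact (le_sub_iff_add_le'.2 (cumLength_add_le hm hlam h (by omega))).trans (le_abs_self _)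
  · rw [abs_sub_comm]
    exact (le_sub_iff_add_le'.2 (cumLength_add_le hm hlam h (by omega))).trans (le_abs_self _)

end cumLength

def discontinuities (lam : Fin d → ℝ) : Set ℝ := cumLength lam '' Set.Ico 1 d

def IsIrreducible (π : Equiv.Perm (Fin d)) : Prop :=
  ∀ k : ℕ, 0 < k → k < d → ∃ i : Fin d, (i : ℕ) < k ∧ k ≤ (π i : ℕ)

structure IsIET (π : Equiv.Perm (Fin d)) (lam : Fin d → ℝ) (T : ℝ → ℝ) : Prop where
  pos : ∀ i, 0 < lam i
  sum_eq_one : ∑ i, lam i = 1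
  apply_eq : ∀ (i : Fin d), ∀ x ∈ Set.Ico (cumLength lam i) (cumLength lam (i + 1)),
    T x = x - cumLength lam i + cumLength (lam ∘ π.symm) (π i)

def partitionPoints (T : ℝ → ℝ) (D : Set ℝ) (n : ℕ) : Set ℝ :=
  {0, 1} ∪ {x ∈ Set.Ico 0 1 | ∃ k ≤ n, T^[k] x ∈ D}

theorem partitionPoints_subset_Icc (T : ℝ → ℝ) (D : Set ℝ) (n : ℕ) :
    partitionPoints T D n ⊆ Set.Icc 0 1 := by
  rintro x ((rfl | rfl) | ⟨hx, -⟩)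
  · simp
  · simp
  · exact Set.Ico_subset_Icc_self hx

namespace IsIET

variable {π : Equiv.Perm (Fin d)} {lam : Fin d → ℝ} {T : ℝ → ℝ}

theorem nonneg (h : IsIET π lam T) (i : Fin d) : 0 ≤ lam i := (h.pos i).le

theorem sum_comp_symm_eq_one (h : IsIET π lam T) : ∑ i, (lam ∘ π.symm) i = 1 := by
  rw [← h.sum_eq_one]; exact Equiv.sum_comp π.symm lam

theorem cumLength_le_one (h : IsIET π lam T) (k : ℕ) : cumLength lam k ≤ 1 :=
  h.sum_eq_one ▸ cumLength_le_sum h.nonneg k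

theorem cumLength_symm_le_one (h : IsIET π lam T) (k : ℕ) :
    cumLength (lam ∘ π.symm) k ≤ 1 :=
  h.sum_comp_symm_eq_one ▸ cumLength_le_sum (fun _ => h.nonneg _) k

theorem cumLength_symm_nonneg (h : IsIET π lam T) (k : ℕ) :
    0 ≤ cumLength (lam ∘ π.symm) k :=
  cumLength_nonneg (fun _ => h.nonneg _) k

theorem cumLength_lt_succ (h : IsIET π lam T) (i : Fin d) :
    cumLength lam i < cumLength lam (i + 1) := by
  rw [cumLength_succ]; linarith [h.pos i]

theorem apply_cumLength (h : IsIET π lam T) (i : Fin d) :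
    T (cumLength lam i) = cumLength (lam ∘ π.symm) (π i) := by
  rw [h.apply_eq i _ ⟨le_rfl, h.cumLength_lt_succ i⟩, sub_self, zero_add]

theorem cumLength_lt (h : IsIET π lam T) {j k : ℕ} (hjk : j < k) (hj : j < d) :
    cumLength lam j < cumLength lam k :=
  (h.cumLength_lt_succ ⟨j, hj⟩).trans_le (cumLength_mono h.nonneg hjk)

theorem apply_cumLength_symm (h : IsIET π lam T) (κ : Fin d) :
    T (cumLength lam (π.symm κ)) = cumLength (lam ∘ π.symm) κ := by
  rw [h.apply_cumLength, Equiv.apply_symm_apply]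

theorem exists_pos_le (h : IsIET π lam T) : ∃ m, 0 < m ∧ m ≤ 1 ∧ ∀ i, m ≤ lam i := by
  have : Nonempty (Fin d) := by
    by_contra hne
    have := h.sum_eq_one
    simp_all [not_nonempty_iff]
  obtain ⟨i₀, -, hi₀⟩ := exists_min_image univ lam univ_nonempty
  exact ⟨lam i₀, h.pos i₀,
    h.sum_eq_one ▸ single_le_sum (fun i _ => h.nonneg i) (mem_univ i₀),
    fun i => hi₀ i (mem_univ i)⟩

theorem exists_mem_Ico (h : IsIET π lam T) {x : ℝ} (hx : x ∈ Set.Ico (0 : ℝ) 1) :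
    ∃ i : Fin d, x ∈ Set.Ico (cumLength lam i) (cumLength lam (i + 1)) :=
  exists_mem_Ico_cumLength hx.1 (h.sum_eq_one ▸ hx.2)

theorem mapsTo (h : IsIET π lam T) : Set.MapsTo T (Set.Ico 0 1) (Set.Ico 0 1) := by
  intro x hx
  obtain ⟨i, hi⟩ := h.exists_mem_Ico hx
  have hB := cumLength_succ (lam := lam ∘ π.symm) (π i)
  have hA := cumLength_succ (lam := lam) i
  simp only [Function.comp_apply, Equiv.symm_apply_apply] at hB
  rw [h.apply_eq i x hi]
  constructor
  · linarith [hi.1, h.cumLength_symm_nonneg (π i)]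
  · linarith [hi.2, h.cumLength_symm_le_one (π i + 1)]

theorem surjOn (h : IsIET π lam T) : Set.SurjOn T (Set.Ico 0 1) (Set.Ico 0 1) := by
  intro y hy
  obtain ⟨κ, hκ⟩ := exists_mem_Ico_cumLength hy.1 (h.sum_comp_symm_eq_one ▸ hy.2)
  set i := π.symm κ
  have hB := cumLength_succ (lam := lam ∘ π.symm) κ
  have hA := cumLength_succ (lam := lam) i
  have hx : y - cumLength (lam ∘ π.symm) κ + cumLength lam i ∈
      Set.Ico (cumLength lam i) (cumLength lam (i + 1)) := by
    simp only [Function.comp_apply] at hB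
    constructor <;> linarith [hκ.1, hκ.2]
  refine ⟨y - cumLength (lam ∘ π.symm) κ + cumLength lam i, ⟨?_, ?_⟩, ?_⟩
  · linarith [hx.1, cumLength_nonneg h.nonneg i]
  · linarith [hx.2, h.cumLength_le_one (i + 1)]
  · rw [h.apply_eq i _ hx, Equiv.apply_symm_apply]; ring

theorem discontinuities_subset (h : IsIET π lam T) : discontinuities lam ⊆ Set.Ico 0 1 := by
  rintro _ ⟨k, hk, rfl⟩
  refine ⟨cumLength_nonneg h.nonneg k, ?_⟩
  simpa [cumLength_of_le le_rfl, h.sum_eq_one] using h.cumLength_lt hk.2 hk.2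

theorem exists_of_mem_insert (h : IsIET π lam T) {p : ℝ}
    (hp : p ∈ insert 1 (discontinuities lam)) :
    ∃ k ≤ d, cumLength lam k = p := by
  rcases hp with rfl | ⟨k, hk, rfl⟩
  · exact ⟨d, le_rfl, by rw [cumLength_of_le le_rfl, h.sum_eq_one]⟩
  · exact ⟨k, hk.2.le, rfl⟩

theorem le_abs_sub (h : IsIET π lam T) {m : ℝ} (hm : ∀ i, m ≤ lam i) {p q : ℝ}
    (hp : p ∈ insert 1 (discontinuities lam)) (hq : q ∈ insert 1 (discontinuities lam))
    (hpq : p ≠ q) : m ≤ |q - p| := by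
  obtain ⟨j, hj, rfl⟩ := h.exists_of_mem_insert hp
  obtain ⟨k, hk, rfl⟩ := h.exists_of_mem_insert hq
  exact le_abs_cumLength_sub hm h.nonneg hj hk fun hjk => hpq (hjk ▸ rfl)

theorem exists_apply_eq_zero (h : IsIET π lam T) (hπ : IsIrreducible π) (hd : 1 < d) :
    ∃ r ∈ discontinuities lam, T r = 0 := by
  obtain ⟨i, hi0, hi1⟩ := hπ 1 one_pos hd
  set r₀ := π.symm ⟨0, by omega⟩ with hr₀
  have hr₀0 : (r₀ : ℕ) ≠ 0 := fun h0 => by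
    have : π r₀ = ⟨0, by omega⟩ := π.apply_symm_apply _
    rw [show r₀ = i from Fin.ext (by omega)] at this
    simp [this] at hi1
  refine ⟨cumLength lam r₀, ⟨r₀, ⟨by omega, r₀.isLt⟩, rfl⟩, ?_⟩
  simp [hr₀, h.apply_cumLength_symm]

theorem le_cumLength_succ_of_disjoint (h : IsIET π lam T) {i : Fin d} {x z : ℝ}
    (hx : x ∈ Set.Ico (cumLength lam i) (cumLength lam (i + 1))) (hz : z ≤ 1)
    (hD : Disjoint (discontinuities lam) (Set.Ioo x z)) : z ≤ cumLength lam (i + 1) := by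
  by_contra! hlt
  rcases lt_or_ge ((i : ℕ) + 1) d with hi | hi
  · exact Set.disjoint_left.1 hD ⟨i + 1, ⟨by omega, hi⟩, rfl⟩ ⟨hx.2, hlt⟩
  · linarith [cumLength_of_le (lam := lam) hi, h.sum_eq_one]

theorem apply_eq_of_disjoint (h : IsIET π lam T) {x z : ℝ} (hx : x ∈ Set.Ico (0 : ℝ) 1)
    (hz : z ≤ 1) (hD : Disjoint (discontinuities lam) (Set.Ioo x z)) {y : ℝ}
    (hy : y ∈ Set.Ico x z) : T y = T x + (y - x) := by
  obtain ⟨i, hi⟩ := h.exists_mem_Ico hx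
  have hzi := h.le_cumLength_succ_of_disjoint hi hz hD
  rw [h.apply_eq i y ⟨hi.1.trans hy.1, hy.2.trans_le hzi⟩, h.apply_eq i x hi]
  ring

theorem apply_right_eq_of_disjoint (h : IsIET π lam T) {x z : ℝ} (hx : x ∈ Set.Ico (0 : ℝ) 1)
    (hxz : x ≤ z) (hz : z < 1) (hD : Disjoint (discontinuities lam) (Set.Ioo x z))
    (hzD : z ∉ discontinuities lam) : T z = T x + (z - x) := by
  obtain ⟨i, hi⟩ := h.exists_mem_Ico hx
  have hzi : z < cumLength lam (i + 1) := by
    refine (h.le_cumLength_succ_of_disjoint hi hz.le hD).lt_of_ne fun heq => ?_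
    rcases lt_or_ge ((i : ℕ) + 1) d with hid | hid
    · exact hzD ⟨i + 1, ⟨by omega, hid⟩, heq.symm⟩
    · rw [cumLength_of_le hid, h.sum_eq_one] at heq
      exact hz.ne heq
  rw [h.apply_eq i z ⟨hi.1.trans hxz, hzi⟩, h.apply_eq i x hi]
  ring

-- For `1 ≤ k < d`, `cumLength (lam ∘ π.symm) k` is a discontinuity of `T⁻¹`.
theorem cumLength_symm_mem (h : IsIET π lam T) {k : ℕ} (hk : 1 ≤ k) (hkd : k ≤ d) :
    cumLength (lam ∘ π.symm) k ∈ insert 1 (orbitUpTo T (discontinuities lam) 2) := by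
  rcases hkd.lt_or_eq with hkd | rfl
  · right
    set i := π.symm ⟨k, hkd⟩
    have hTi : T (cumLength lam i) = cumLength (lam ∘ π.symm) k := h.apply_cumLength_symm _
    by_cases hi0 : (i : ℕ) = 0
    · -- `cumLength lam i = 0 = T r₀`, so the point is `T^[2] r₀`
      set r₀ := π.symm ⟨0, by omega⟩
      have hr₀ : (r₀ : ℕ) ≠ 0 := fun h0 => by
        have : i = r₀ := Fin.ext (by omega)
        simp [i, r₀] at this
        omega
      have hTr₀ : T (cumLength lam r₀) = cumLength lam i := by
        rw [h.apply_cumLength_symm, hi0]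
        simp
      rw [← hTi, ← hTr₀]
      exact iterate_mem_orbitUpTo (T := T) (D := discontinuities lam)
        ⟨r₀, ⟨by omega, r₀.isLt⟩, rfl⟩ one_le_two le_rfl
    · rw [← hTi]
      exact iterate_mem_orbitUpTo (e := 1) (D := discontinuities lam)
        ⟨i, ⟨by omega, i.isLt⟩, rfl⟩ le_rfl one_le_two
  · left
    rw [cumLength_of_le le_rfl, h.sum_comp_symm_eq_one]

theorem add_sub_mem_of_disjoint (h : IsIET π lam T) {x z : ℝ} (hx : x ∈ Set.Ico (0 : ℝ) 1)
    (hxz : x < z) (hD : Disjoint (discontinuities lam) (Set.Ioo x z))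
    (hzD : z ∈ insert 1 (discontinuities lam)) :
    T x + (z - x) ∈ insert 1 (orbitUpTo T (discontinuities lam) 2) := by
  obtain ⟨i, hi⟩ := h.exists_mem_Ico hx
  obtain ⟨k, hkd, rfl⟩ := h.exists_of_mem_insert hzD
  have hle := h.le_cumLength_succ_of_disjoint hi (h.cumLength_le_one k) hD
  have hik : i + 1 ≤ k := by
    by_contra! hki
    linarith [hi.1, cumLength_mono h.nonneg (Nat.lt_succ_iff.1 hki)]
  have hB := cumLength_succ (lam := lam ∘ π.symm) (π i)
  simp only [Function.comp_apply, Equiv.symm_apply_apply] at hB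
  rw [le_antisymm hle (cumLength_mono h.nonneg hik), h.apply_eq i x hi, cumLength_succ]
  convert h.cumLength_symm_mem (k := π i + 1) (by omega) (π i).isLt using 1
  rw [hB]
  ring

theorem min_le_abs_sub (h : IsIET π lam T) {c m : ℝ}
    (hba : ∀ p ∈ discontinuities lam, ∀ q ∈ discontinuities lam, ∀ n : ℕ, 1 ≤ n →
      c ≤ n * |q - T^[n] p|)
    (hm : ∀ i, m ≤ lam i) {n : ℕ} {p y : ℝ} (hp : p ∈ discontinuities lam)
    (hy : y ∈ insert 1 (discontinuities lam) ∪ orbitUpTo T (discontinuities lam) (n + 1))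
    (hpy : p ≠ y) : min (c / (n + 1)) m ≤ |y - p| := by
  rcases hy with hy | hy
  · exact (min_le_right _ _).trans (h.le_abs_sub hm (Set.mem_insert_of_mem _ hp) hy hpy)
  · simp only [orbitUpTo, Set.mem_iUnion, Set.mem_image] at hy
    obtain ⟨e, ⟨he1, hen⟩, r, hr, rfl⟩ := hy
    refine (min_le_left _ _).trans ((div_le_iff₀ (by positivity)).2 ?_)
    calc c ≤ e * |p - T^[e] r| := hba r hr p hp e he1
      _ ≤ (n + 1) * |T^[e] r - p| := by
        rw [abs_sub_comm]; gcongr; exact_mod_cast hen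
      _ = |T^[e] r - p| * (n + 1) := mul_comm _ _

section Gap

variable {n : ℕ} {u v : ℝ}

theorem add_le_one_and_disjoint (h : IsIET π lam T) (hu : 0 ≤ u) (huv : u < v) (hv : v ≤ 1)
    (hgap : ∀ y ∈ Set.Ioo u v, ∀ k ≤ n, T^[k] y ∉ discontinuities lam)
    {k : ℕ} (hk : k ≤ n)
    (htr : ∀ y ∈ Set.Ico u v, T^[k] y = T^[k] u + (y - u)) :
    T^[k] u + (v - u) ≤ 1 ∧
      Disjoint (discontinuities lam) (Set.Ioo (T^[k] u) (T^[k] u + (v - u))) := by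
  have himg := image_Ico_of_translate htr
  have hsub : T^[k] '' Set.Ico u v ⊆ Set.Ico 0 1 :=
    ((h.mapsTo.iterate k).mono_left (Set.Ico_subset_Ico_right hv |>.trans'
      (Set.Ico_subset_Ico_left hu))).image_subset
  rw [himg] at hsub
  refine ⟨((Set.Ico_subset_Ico_iff (by linarith)).1 hsub).2,
    Set.disjoint_right.2 fun r hr hrD => ?_⟩
  obtain ⟨y, hy, rfl⟩ : r ∈ T^[k] '' Set.Ico u v := himg ▸ Set.Ioo_subset_Ico_self hr
  have hyu : u ≠ y := by rintro rfl; exact hr.1.ne rfl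
  exact hgap y ⟨hy.1.lt_of_ne hyu, hy.2⟩ k hk hrD

theorem iterate_eq_add_of_gap (h : IsIET π lam T) (hu : 0 ≤ u) (huv : u < v) (hv : v ≤ 1)
    (hgap : ∀ y ∈ Set.Ioo u v, ∀ k ≤ n, T^[k] y ∉ discontinuities lam) :
    ∀ k ≤ n + 1, ∀ y ∈ Set.Ico u v, T^[k] y = T^[k] u + (y - u)
  | 0, _ => by simp
  | k + 1, hk => fun y hy => by
    have htr := iterate_eq_add_of_gap h hu huv hv hgap k (by omega)
    obtain ⟨hle, hD⟩ := h.add_le_one_and_disjoint hu huv hv hgap (by omega) htr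
    rw [Function.iterate_succ_apply', Function.iterate_succ_apply', htr y hy]
    rw [h.apply_eq_of_disjoint (h.mapsTo.iterate k ⟨hu, huv.trans_le hv⟩) hle hD
      (y := T^[k] u + (y - u)) ⟨by linarith [hy.1], by linarith [hy.2]⟩]
    ring

theorem iterate_succ_add_mem (h : IsIET π lam T) (hu : 0 ≤ u) (huv : u < v) (hv : v ≤ 1)
    (hgap : ∀ y ∈ Set.Ioo u v, ∀ k ≤ n, T^[k] y ∉ discontinuities lam)
    {k : ℕ} (hk : k ≤ n)
    (hR : T^[k] u + (v - u) ∈ insert 1 (discontinuities lam)) :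
    T^[k + 1] u + (v - u) ∈ insert 1 (orbitUpTo T (discontinuities lam) 2) := by
  obtain ⟨-, hD⟩ := h.add_le_one_and_disjoint hu huv hv hgap hk
    (h.iterate_eq_add_of_gap hu huv hv hgap k (by omega))
  have := h.add_sub_mem_of_disjoint (h.mapsTo.iterate k ⟨hu, huv.trans_le hv⟩)
    (by linarith) hD hR
  rwa [add_sub_cancel_left, ← Function.iterate_succ_apply' T k u] at this

theorem iterate_succ_add_eq (h : IsIET π lam T) (hu : 0 ≤ u) (huv : u < v) (hv : v ≤ 1)
    (hgap : ∀ y ∈ Set.Ioo u v, ∀ k ≤ n, T^[k] y ∉ discontinuities lam)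
    {k : ℕ} (hk : k ≤ n)
    (hR : T^[k] u + (v - u) ∉ insert 1 (discontinuities lam)) :
    T^[k + 1] u + (v - u) = T (T^[k] u + (v - u)) := by
  obtain ⟨hle, hD⟩ := h.add_le_one_and_disjoint hu huv hv hgap hk
    (h.iterate_eq_add_of_gap hu huv hv hgap k (by omega))
  rw [Set.mem_insert_iff, not_or] at hR
  rw [h.apply_right_eq_of_disjoint (h.mapsTo.iterate k ⟨hu, huv.trans_le hv⟩) (by linarith)
    (hle.lt_of_ne hR.1) hD hR.2, add_sub_cancel_left, Function.iterate_succ_apply']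

theorem exists_iterate_mem_of_gap (h : IsIET π lam T) (hu : 0 ≤ u) (huv : u < v) (hv : v < 1)
    (hgap : ∀ y ∈ Set.Ioo u v, ∀ k ≤ n, T^[k] y ∉ discontinuities lam)
    (hhit : ∃ b ≤ n, T^[b] v ∈ discontinuities lam) :
    ∃ b ≤ n, T^[b] v ∈ discontinuities lam ∧ T^[b] u + (v - u) = T^[b] v := by
  classical
  obtain ⟨hbn, hbD⟩ := Nat.find_spec hhit
  have hfirst : ∀ k < Nat.find hhit, T^[k] v ∉ discontinuities lam := fun k hk hkD =>
    Nat.find_min hhit hk ⟨by omega, hkD⟩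
  refine ⟨Nat.find hhit, hbn, hbD, ?_⟩
  suffices ∀ k ≤ Nat.find hhit, T^[k] u + (v - u) = T^[k] v from this _ le_rfl
  intro k hk
  induction k with
  | zero => simp
  | succ k ih =>
    have hR : T^[k] u + (v - u) ∉ insert 1 (discontinuities lam) := by
      rw [ih (by omega), Set.mem_insert_iff, not_or]
      exact ⟨(h.mapsTo.iterate k ⟨hu.trans huv.le, hv⟩).2.ne, hfirst k (by omega)⟩
    rw [h.iterate_succ_add_eq hu huv hv.le hgap (by omega) hR, ih (by omega),
      Function.iterate_succ_apply']

end Gap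

theorem min_le_sub_of_adjacent (h : IsIET π lam T) (hπ : IsIrreducible π) {c m : ℝ}
    (hba : ∀ p ∈ discontinuities lam, ∀ q ∈ discontinuities lam, ∀ n : ℕ, 1 ≤ n →
      c ≤ n * |q - T^[n] p|)
    (hm : ∀ i, m ≤ lam i) (hm1 : m ≤ 1) {n : ℕ} {u v : ℝ}
    (hu : u ∈ partitionPoints T (discontinuities lam) n)
    (hv : v ∈ partitionPoints T (discontinuities lam) n) (huv : u < v)
    (hgap : Disjoint (partitionPoints T (discontinuities lam) n) (Set.Ioo u v)) :
    min (c / (n + 1)) m ≤ v - u := by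
  set D := discontinuities lam
  have hu0 := (partitionPoints_subset_Icc T D n hu).1
  have hv1 := (partitionPoints_subset_Icc T D n hv).2
  have hgap' : ∀ y ∈ Set.Ioo u v, ∀ k ≤ n, T^[k] y ∉ D := fun y hy k hk hyD =>
    Set.disjoint_right.1 hgap hy
      (Or.inr ⟨⟨hu0.trans hy.1.le, hy.2.trans_le hv1⟩, k, hk, hyD⟩)
  have hfinal : ∀ p ∈ D, ∀ y ∈ insert 1 D ∪ orbitUpTo T D (n + 1), |y - p| = v - u →
      min (c / (n + 1)) m ≤ v - u := fun p hp y hy hpy => by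
    refine hpy ▸ h.min_le_abs_sub hba hm hp hy fun hpy' => ?_
    rw [hpy', sub_self, abs_zero] at hpy
    linarith
  -- the right endpoint `T^[k] u + (v - u)` of the `k`-th image of `[u, v)`
  have hchain : ∀ b ≤ n, T^[b] u + (v - u) ∈ insert 1 D → ∀ a, b ≤ a → a ≤ n →
      T^[a] u + (v - u) ∈ insert 1 D ∪ orbitUpTo T D (n + 1) := by
    intro b hbn hRb a hba han
    refine Set.union_subset_union_right _ (orbitUpTo_mono (by omega))
      (mem_union_orbitUpTo_of_step (R := fun k => T^[k] u + (v - u)) (m := n) hRb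
        (fun k _ hk hR => ?_) (fun k _ hk hR => h.iterate_succ_add_eq hu0 huv hv1 hgap' hk.le hR)
        a hba han)
    rw [Set.insert_union]
    exact Set.insert_subset_insert Set.subset_union_right
      (h.iterate_succ_add_mem hu0 huv hv1 hgap' hk.le hR)
  have hδ : ∀ x, |x - (x + (v - u))| = v - u := fun x => by
    rw [sub_add_cancel_left, abs_neg, abs_of_pos (sub_pos.2 huv)]
  obtain ⟨b, hbn, hb⟩ : ∃ b ≤ n, (b = 0 ∧ v = 1) ∨ T^[b] u + (v - u) ∈ D := by
    rcases hv with (rfl | rfl) | ⟨hv01, hhit⟩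
    · linarith
    · exact ⟨0, n.zero_le, Or.inl ⟨rfl, rfl⟩⟩
    · obtain ⟨b, hbn, hbD, hRb⟩ := h.exists_iterate_mem_of_gap hu0 huv hv01.2 hgap' hhit
      exact ⟨b, hbn, Or.inr (hRb ▸ hbD)⟩
  rcases hu with (rfl | rfl) | ⟨-, a, han, haD⟩
  · rcases hb with ⟨-, rfl⟩ | hbD
    · linarith [min_le_right (c / (n + 1)) m]
    · have hd : 1 < d := by obtain ⟨k, ⟨hk1, hkd⟩, -⟩ := hbD; omega
      obtain ⟨r, hr, hr0⟩ := h.exists_apply_eq_zero hπ hd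
      refine hfinal _ hbD (T^[b] 0) (Or.inr ?_) (hδ _)
      rw [← hr0, ← Function.iterate_succ_apply]
      exact iterate_mem_orbitUpTo hr (by omega) (by omega)
  · linarith
  · rcases lt_or_ge a b with hab | hab
    · have hbD := hb.resolve_left (by omega)
      refine hfinal _ hbD (T^[b] u) (Or.inr ?_) (hδ _)
      rw [show b = b - a + a by omega, Function.iterate_add_apply]
      exact iterate_mem_orbitUpTo haD (by omega) (by omega)
    · have hRb : T^[b] u + (v - u) ∈ insert 1 D := by
        rcases hb with ⟨rfl, rfl⟩ | hbD
        · simp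
        · exact Set.mem_insert_of_mem _ hbD
      exact hfinal _ haD _ (hchain b hbn hRb a hab han)
        (by rw [add_sub_cancel_left, abs_of_pos (sub_pos.2 huv)])

theorem union_image_iterate_eq_partitionPoints (h : IsIET π lam T) {S : ℝ → ℝ}
    (hS : ∀ x ∈ Set.Ico (0 : ℝ) 1, S (T x) = x ∧ T (S x) = x) (n : ℕ) :
    {0, 1} ∪ ⋃ i ∈ range (n + 1), S^[i] '' discontinuities lam =
      partitionPoints T (discontinuities lam) n := by
  have hinv : Set.InvOn S T (Set.Ico 0 1) (Set.Ico 0 1) :=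
    ⟨fun x hx => (hS x hx).1, fun x hx => (hS x hx).2⟩
  simp_rw [image_iterate_eq_inter_preimage hinv h.mapsTo (hinv.1.mapsTo h.surjOn)
    h.discontinuities_subset]
  ext x
  simp [partitionPoints]

end IsIET

end IntervalExchange

open IntervalExchange

theorem badly_approximable_implies_linearly_recurrent_general
    (d : ℕ) (π : Equiv.Perm (Fin d))
    -- irreducibility: no proper initial segment `{0, …, k-1}` is invariant under `π`
    (hirr : ∀ k : ℕ, 0 < k → k < d → ∃ i : Fin d, (i : ℕ) < k ∧ k ≤ (π i : ℕ))
    (lam : Fin d → ℝ) (hpos : ∀ i, 0 < lam i) (hsum : ∑ i, lam i = 1)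
    (T : ℝ → ℝ)
    (hT : ∀ i : Fin d, ∀ x ∈ Set.Ico (∑ j ∈ univ.filter (fun j => j < i), lam j)
        ((∑ j ∈ univ.filter (fun j => j < i), lam j) + lam i),
      T x = x - (∑ j ∈ univ.filter (fun j => j < i), lam j)
        + ∑ j ∈ univ.filter (fun j => π j < π i), lam j)
    -- the set of discontinuities `D = {β₁, …, β_{d-1}}`
    (D : Set ℝ)
    (hD : D = {x | ∃ i : Fin d, 1 ≤ (i : ℕ) ∧ x = ∑ j ∈ univ.filter (fun j => j < i), lam j})
    -- `S` is the inverse of `T` on `[0,1)`, used to form the preimages `T^{-i} D`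
    (S : ℝ → ℝ) (hS : ∀ x ∈ Set.Ico (0:ℝ) 1, S (T x) = x ∧ T (S x) = x)
    -- the partition points determined by `D, T^{-1}D, …, T^{-n}D` together with `0` and `1`
    (P : ℕ → Set ℝ)
    (hP : ∀ n, P n = {0, 1} ∪ ⋃ i ∈ Finset.range (n + 1), S^[i] '' D)
    -- `ε n` is the length of the shortest interval of the partition
    (ε : ℕ → ℝ)
    (hε : ∀ n, ε n = sInf {t | ∃ x ∈ P n, ∃ y ∈ P n, x < y ∧ t = y - x})
    -- badly approximable, with constant `c > 0`
    (c : ℝ) (hc : 0 < c)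
    (hba : ∀ p ∈ D, ∀ q ∈ D, ∀ n : ℕ, 1 ≤ n → c ≤ (n : ℝ) * |q - T^[n] p|) :
    -- linear recurrence
    ∃ c' : ℝ, 0 < c' ∧ ∀ n : ℕ, 1 ≤ n → c' ≤ (n : ℝ) * ε n := by
  have hIET : IsIET π lam T := ⟨hpos, hsum, fun i x hx => by
    have := hT i x (by rwa [sum_filter_lt_eq_cumLength, ← cumLength_succ])
    rwa [sum_filter_lt_eq_cumLength, sum_filter_perm_lt_eq_cumLength] at this⟩
  obtain rfl : D = discontinuities lam := by
    rw [hD]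
    ext x
    constructor
    · rintro ⟨i, hi, rfl⟩
      exact ⟨i, ⟨hi, i.isLt⟩, rfl⟩
    · rintro ⟨k, ⟨hk, hkd⟩, rfl⟩
      exact ⟨⟨k, hkd⟩, hk, rfl⟩
  obtain ⟨m, hm0, hm1, hm⟩ := hIET.exists_pos_le
  refine ⟨min (c / 2) m, lt_min (half_pos hc) hm0, fun n hn => ?_⟩
  have hPn : P n = partitionPoints T (discontinuities lam) n :=
    (hP n).trans (hIET.union_image_iterate_eq_partitionPoints hS n)
  have hfin : (partitionPoints T (discontinuities lam) n).Finite := by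
    rw [← hPn, hP n]
    exact (Set.toFinite _).union ((range (n + 1)).finite_toSet.biUnion
      fun i _ => ((Set.finite_Ico 1 d).image _).image _)
  calc min (c / 2) m ≤ n * min (c / (n + 1)) m := min_le_mul_min hc.le hm0.le hn
    _ ≤ n * ε n := by
      gcongr
      rw [hε n, hPn]
      exact le_sInf_sub_of_adjacent hfin (Or.inl (Or.inl rfl)) (Or.inl (Or.inr rfl)) one_pos
        fun x hx y hy hxy hgap => hIET.min_le_sub_of_adjacent hirr hba hm hm1 hx hy hxy hgap

/-- Every badly approximable interval exchange transformation with irreducible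
permutation is linearly recurrent: if `inf { n |q - Tⁿ p| } ≥ c > 0` over all
discontinuities `p, q` of `T`, then `inf { n ε_n } > 0`. -/
theorem badly_approximable_implies_linearly_recurrent
    (d : ℕ) (hd : 1 ≤ d) (π : Equiv.Perm (Fin d))
    -- irreducibility: no proper initial segment `{0, …, k-1}` is invariant under `π`
    (hirr : ∀ k : ℕ, 0 < k → k < d → ∃ i : Fin d, (i : ℕ) < k ∧ k ≤ (π i : ℕ))
    (lam : Fin d → ℝ) (hpos : ∀ i, 0 < lam i) (hsum : ∑ i, lam i = 1)
    (T : ℝ → ℝ)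
    (hT : ∀ i : Fin d, ∀ x ∈ Set.Ico (∑ j ∈ univ.filter (fun j => j < i), lam j)
        ((∑ j ∈ univ.filter (fun j => j < i), lam j) + lam i),
      T x = x - (∑ j ∈ univ.filter (fun j => j < i), lam j)
        + ∑ j ∈ univ.filter (fun j => π j < π i), lam j)
    -- the set of discontinuities `D = {β₁, …, β_{d-1}}`
    (D : Set ℝ)
    (hD : D = {x | ∃ i : Fin d, 1 ≤ (i : ℕ) ∧ x = ∑ j ∈ univ.filter (fun j => j < i), lam j})
    -- `S` is the inverse of `T` on `[0,1)`, used to form the preimages `T^{-i} D`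
    (S : ℝ → ℝ) (hS : ∀ x ∈ Set.Ico (0:ℝ) 1, S (T x) = x ∧ T (S x) = x)
    -- the partition points determined by `D, T^{-1}D, …, T^{-n}D` together with `0` and `1`
    (P : ℕ → Set ℝ)
    (hP : ∀ n, P n = {0, 1} ∪ ⋃ i ∈ Finset.range (n + 1), S^[i] '' D)
    -- `ε n` is the length of the shortest interval of the partition
    (ε : ℕ → ℝ)
    (hε : ∀ n, ε n = sInf {t | ∃ x ∈ P n, ∃ y ∈ P n, x < y ∧ t = y - x})
    -- badly approximable, with constant `c > 0`
    (c : ℝ) (hc : 0 < c)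
    (hba : ∀ p ∈ D, ∀ q ∈ D, ∀ n : ℕ, 1 ≤ n → c ≤ (n : ℝ) * |q - T^[n] p|) :
    -- linear recurrence
    ∃ c' : ℝ, 0 < c' ∧ ∀ n : ℕ, 1 ≤ n → c' ≤ (n : ℝ) * ε n :=
  badly_approximable_implies_linearly_recurrent_general d π hirr lam hpos hsum T hT D hD S hS P hP ε
    hε c hc hba
end

section
/- Let T be an ergodic measure-preserving transformation on a probability space (X, ℬ, μ) and f ∈ L²(X, ℬ, μ). If there exists ρ > 0 such that for all δ > 0 and all b ∈ ℕ, μ({x ∈ X : |f(T^{i+1}x) - f(T^i x)| < δ for all -b ≤ i ≤ b}) ≥ ρ, then f is almost-everywhere constant. -/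
open MeasureTheory
open scoped ENNReal

/-- Quantitative ergodicity lemma: if `T` is an invertible ergodic measure-preserving
transformation and `f ∈ L²` satisfies, for some fixed `ρ > 0`,
`μ {x : |f(T^{i+1}x) - f(T^i x)| < δ for all -b ≤ i ≤ b} ≥ ρ` for every `δ > 0` and
`b ∈ ℕ`, then `f` is almost everywhere constant. -/
theorem quantitative_ergodicity {X : Type*} [MeasurableSpace X]
    (μ : Measure X) [IsProbabilityMeasure μ]
    (T S : X → X) (hT : Ergodic T μ) (hS : MeasurePreserving S μ μ)
    (hinv : ∀ x, S (T x) = x ∧ T (S x) = x)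
    -- `iter i` is the `i`-th power of `T` for `i ∈ ℤ` (negative powers via `S = T⁻¹`)
    (iter : ℤ → X → X)
    (hiter : ∀ (i : ℤ) (x : X),
      iter i x = if 0 ≤ i then T^[i.toNat] x else S^[(-i).toNat] x)
    (f : X → ℝ) (hf : MemLp f 2 μ)
    (ρ : ℝ) (hρ : 0 < ρ)
    (h : ∀ δ : ℝ, 0 < δ → ∀ b : ℕ,
      ENNReal.ofReal ρ ≤
        μ {x | ∀ i : ℤ, -(b : ℤ) ≤ i → i ≤ (b : ℤ) →
          |f (iter (i + 1) x) - f (iter i x)| < δ}) :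
    ∃ C : ℝ, f =ᵐ[μ] fun _ => C := by
  classical
  -- a measurable representative of `f`
  set fm : X → ℝ := hf.aestronglyMeasurable.mk f with hfm_def
  have hfm_meas : Measurable fm :=
    hf.aestronglyMeasurable.stronglyMeasurable_mk.measurable
  have hfm_eq : f =ᵐ[μ] fm := hf.aestronglyMeasurable.ae_eq_mk
  have hN0 : μ {x | f x ≠ fm x} = 0 := by
    exact ae_iff.1 hfm_eq
  -- the exceptional null set, invariant enough for our purposes
  set Z : Set X := ⋃ n : ℕ, T^[n] ⁻¹' {x | f x ≠ fm x} with hZ_def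
  have hZ : μ Z = 0 :=
    measure_iUnion_null fun n =>
      ((hT.toMeasurePreserving.iterate n).quasiMeasurePreserving).preimage_null hN0
  -- Step 1: for every δ > 0, the set where |fm (T x) - fm x| ≥ δ is null
  have key : ∀ δ : ℝ, 0 < δ → μ {x | δ ≤ |fm (T x) - fm x|} = 0 := by
    intro δ hδ
    by_contra hB
    set B : Set X := {x | δ ≤ |fm (T x) - fm x|} with hB_def
    have hBmeas : MeasurableSet B := by
      have : Measurable fun x => |fm (T x) - fm x| :=
        ((hfm_meas.comp hT.toMeasurePreserving.measurable).sub hfm_meas).abs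
      exact measurableSet_le measurable_const this
    set U : Set X := ⋃ n : ℕ, T^[n] ⁻¹' B with hU_def
    have hUmeas : MeasurableSet U :=
      MeasurableSet.iUnion fun n =>
        hBmeas.preimage (hT.toMeasurePreserving.measurable.iterate n)
    have hsub : T ⁻¹' U ⊆ U := by
      rintro x hx
      simp only [hU_def, Set.mem_preimage, Set.mem_iUnion] at hx ⊢
      obtain ⟨n, hn⟩ := hx
      exact ⟨n + 1, by rwa [Function.iterate_succ_apply]⟩
    have hfull : μ U = 1 := by
      rcases hT.ae_empty_or_univ_of_preimage_ae_le' hUmeas.nullMeasurableSet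
          hsub.eventuallyLE (measure_ne_top μ U) with h0 | h1
      · exfalso
        apply hB
        have hBU : B ⊆ U := by
          intro x hx
          exact Set.mem_iUnion.2 ⟨0, by simpa using hx⟩
        have : μ U = 0 := by simpa using h0.measure_eq
        exact le_antisymm (this ▸ measure_mono hBU) zero_le
      · have : μ U = μ Set.univ := h1.measure_eq
        simpa using this
    -- choose N with μ (Accumulate …) > 1 - ρ'
    have htends := tendsto_measure_iUnion_accumulate (μ := μ)
      (f := fun n : ℕ => T^[n] ⁻¹' B)
    rw [← hU_def, hfull] at htends
    have hρ' : (0 : ℝ≥0∞) < ENNReal.ofReal ρ := ENNReal.ofReal_pos.2 hρ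
    have hlt : (1 : ℝ≥0∞) - ENNReal.ofReal ρ < 1 :=
      ENNReal.sub_lt_self ENNReal.one_ne_top one_ne_zero hρ'.ne'
    have hev : ∀ᶠ N in Filter.atTop,
        (1 : ℝ≥0∞) - ENNReal.ofReal ρ < μ (Set.accumulate (fun n : ℕ => T^[n] ⁻¹' B) N) :=
      htends.eventually (eventually_gt_nhds hlt)
    obtain ⟨N, hN⟩ := hev.exists
    set A : Set X := Set.accumulate (fun n : ℕ => T^[n] ⁻¹' B) N with hA_def
    have hAmeas : MeasurableSet A :=
      MeasurableSet.iUnion fun n => MeasurableSet.iUnion fun _ =>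
        hBmeas.preimage (hT.toMeasurePreserving.measurable.iterate n)
    set H : Set X := {x | ∀ i : ℤ, -(N : ℤ) ≤ i → i ≤ (N : ℤ) →
      |f (iter (i + 1) x) - f (iter i x)| < δ} with hH_def
    have hHA : H \ Z ⊆ Aᶜ := by
      rintro x ⟨hxH, hxZ⟩ hxA
      simp only [hA_def, Set.mem_accumulate] at hxA
      obtain ⟨n, hnN, hnB⟩ := hxA
      -- `T^[n] x ∈ B`
      have hfmem : ∀ m : ℕ, f (T^[m] x) = fm (T^[m] x) := by
        intro m
        by_contra hc
        exact hxZ (Set.mem_iUnion.2 ⟨m, hc⟩)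
      have h1 : |f (iter ((n : ℤ) + 1) x) - f (iter (n : ℤ) x)| < δ := by
        refine hxH (n : ℤ) ?_ (by exact_mod_cast hnN)
        have : (0 : ℤ) ≤ (n : ℤ) := Int.natCast_nonneg n
        omega
      have e1 : iter ((n : ℤ) + 1) x = T^[n + 1] x := by
        rw [hiter]
        simp only [if_pos (by positivity : (0:ℤ) ≤ (n : ℤ) + 1)]
        norm_num
      have e2 : iter (n : ℤ) x = T^[n] x := by
        rw [hiter]
        simp [Int.natCast_nonneg]
      rw [e1, e2, hfmem (n + 1), hfmem n, Function.iterate_succ_apply'] at h1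
      exact absurd hnB (not_le.2 h1)
    have hμH : ENNReal.ofReal ρ ≤ μ H := h δ hδ N
    have hμHZ : μ H ≤ μ Aᶜ := by
      calc μ H ≤ μ (H \ Z ∪ Z) := measure_mono (by intro x hx; by_cases hz : x ∈ Z <;> simp [hx, hz])
        _ ≤ μ (H \ Z) + μ Z := measure_union_le _ _
        _ = μ (H \ Z) := by rw [hZ, add_zero]
        _ ≤ μ Aᶜ := measure_mono hHA
    have hcompl : μ Aᶜ = 1 - μ A := by
      rw [measure_compl hAmeas (measure_ne_top μ A)]
      simp
    have hA1 : μ A ≤ 1 := prob_le_one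
    have hcontr : (1 : ℝ≥0∞) < 1 := by
      calc (1 : ℝ≥0∞) = (1 - ENNReal.ofReal ρ) + ENNReal.ofReal ρ := by
            rw [tsub_add_cancel_of_le (le_trans hμH prob_le_one)]
        _ < μ A + ENNReal.ofReal ρ := by
            exact ENNReal.add_lt_add_right ENNReal.ofReal_ne_top hN
        _ ≤ μ A + μ Aᶜ := add_le_add_right (hμH.trans hμHZ) _
        _ = 1 := by rw [hcompl, add_tsub_cancel_of_le hA1]
    exact absurd hcontr (lt_irrefl _)
  -- Step 2: fm ∘ T =ᵐ fm
  have hfmT : (fun x => fm (T x)) =ᵐ[μ] fm := by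
    have : μ {x | fm (T x) ≠ fm x} = 0 := by
      have hsub : {x | fm (T x) ≠ fm x} ⊆
          ⋃ n : ℕ, {x | 1 / (n + 1 : ℝ) ≤ |fm (T x) - fm x|} := by
        intro x hx
        have hpos : 0 < |fm (T x) - fm x| := by
          rw [abs_pos, sub_ne_zero]; exact hx
        obtain ⟨n, hn⟩ := exists_nat_one_div_lt hpos
        exact Set.mem_iUnion.2 ⟨n, hn.le⟩
      refine le_antisymm (le_trans (measure_mono hsub) ?_) zero_le
      rw [measure_iUnion_null fun n => key _ (by positivity)]
    rwa [Filter.EventuallyEq, ae_iff]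
  -- Step 3: f ∘ T =ᵐ f, then ergodicity
  have hfT : f ∘ T =ᵐ[μ] f := by
    have h1 : (fun x => f (T x)) =ᵐ[μ] fun x => fm (T x) :=
      hT.quasiMeasurePreserving.ae_eq_comp hfm_eq
    exact h1.trans (hfmT.trans hfm_eq.symm)
  obtain ⟨c, hc⟩ := hT.ae_eq_const_of_ae_eq_comp_ae hf.aestronglyMeasurable hfT
  exact ⟨c, hc⟩
end

section
/- Let μ be Lebesgue measure on [0,1), let f : [0,1) → ℝ be measurable, and for each l ∈ ℤ write f_l = f∘T^l where T is an invertible measure-preserving transformation. Suppose that for every δ > 0 and every b ∈ ℕ the set {x ∈ [0,1) : |f_i(x) - f_i(T^{-1}x)| < δ for all -b ≤ i ≤ b} has measure at least ρ for a fixed ρ > 0. If T is ergodic, then f is almost-everywhere constant. -/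
/-!
Fix `δ > 0`. The set of points `x` with `|f (T^i x) - f (T^(i-1) x)| < δ` for every `i ∈ ℤ` is
almost `T`-invariant, because `T` only shifts the index `i`; being the decreasing intersection of
the sets of the hypothesis, it has measure at least `ρ > 0`. By ergodicity it has full measure,
so `i = 1` gives `|f (T x) - f x| < δ` a.e. Letting `δ → 0`, `f ∘ T = f` a.e., and ergodicity
again makes `f` a.e. constant.
-/

open MeasureTheory Filter

variable {α : Type*}

def intIterate (T S : α → α) (i : ℤ) : α → α :=
  if 0 ≤ i then T^[i.toNat] else S^[(-i).toNat]

section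

variable {T S : α → α}

theorem intIterate_natCast (n : ℕ) : intIterate T S n = T^[n] := by
  simp [intIterate]

theorem intIterate_neg_natCast (n : ℕ) : intIterate T S (-n) = S^[n] := by
  unfold intIterate
  rcases n with _ | n
  · simp
  · rw [if_neg (by omega), neg_neg, Int.toNat_natCast]

theorem intIterate_apply_of_leftInverse {x : α} (hx : S (T x) = x) (i : ℤ) :
    intIterate T S i (T x) = intIterate T S (i + 1) x := by
  obtain ⟨n, rfl | rfl⟩ := Int.eq_nat_or_neg i
  · rw [← Nat.cast_succ, intIterate_natCast, intIterate_natCast, Function.iterate_succ_apply]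
  · rcases n with _ | n
    · simp [intIterate]
    · rw [show -((n + 1 : ℕ) : ℤ) + 1 = -(n : ℤ) by push_cast; ring, intIterate_neg_natCast,
        intIterate_neg_natCast, Function.iterate_succ_apply, hx]

theorem intIterate_apply_of_rightInverse {x : α} (hx : T (S x) = x) (i : ℤ) :
    intIterate T S i (S x) = intIterate T S (i - 1) x := by
  have h := intIterate_apply_of_leftInverse (T := T) (x := S x) (congrArg S hx) (i - 1)
  rwa [hx, sub_add_cancel, eq_comm] at h

end

theorem MeasureTheory.MeasurePreserving.intIterate [MeasurableSpace α] {μ : Measure α}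
    {T S : α → α} (hT : MeasurePreserving T μ μ) (hS : MeasurePreserving S μ μ) (i : ℤ) :
    MeasurePreserving (intIterate T S i) μ μ := by
  unfold _root_.intIterate
  split_ifs
  exacts [hT.iterate _, hS.iterate _]

variable [MeasurableSpace α] {μ : Measure α}

theorem ae_eq_of_forall_ae_dist_lt {E : Type*} [MetricSpace E] {u v : α → E}
    (h : ∀ δ > 0, ∀ᵐ x ∂μ, dist (u x) (v x) < δ) : u =ᵐ[μ] v := by
  filter_upwards [ae_all_iff.2 fun n : ℕ => h (1 / (n + 1)) Nat.one_div_pos_of_nat] with x hx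
  refine eq_of_forall_dist_le fun ε hε => ?_
  obtain ⟨n, hn⟩ := exists_nat_one_div_lt hε
  exact ((hx n).trans hn).le

theorem le_measure_iInter_of_le_measure_Icc [IsFiniteMeasure μ] {s : ℤ → Set α}
    (hs : ∀ i, NullMeasurableSet (s i) μ) {r : ENNReal}
    (h : ∀ b : ℕ, r ≤ μ {x | ∀ i : ℤ, -(b : ℤ) ≤ i → i ≤ b → x ∈ s i}) :
    r ≤ μ (⋂ i, s i) := by
  set B : ℕ → Set α := fun b => {x | ∀ i : ℤ, -(b : ℤ) ≤ i → i ≤ b → x ∈ s i}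
  have hB : ⋂ b, B b = ⋂ i, s i := by
    ext x
    simp only [B, Set.mem_iInter, Set.mem_ofPred_eq]
    refine ⟨fun hx i => hx i.natAbs i (by omega) (by omega), fun hx b i _ _ => hx i⟩
  have hBanti : Antitone B := fun a b hab x hx i h₁ h₂ => hx i (by omega) (by omega)
  have hBm : ∀ b, NullMeasurableSet (B b) μ := fun b => by
    simpa only [B, Set.ofPred_forall] using
      .iInter fun i => .iInter fun _ => .iInter fun _ => hs i
  rw [← hB, hBanti.measure_iInter hBm ⟨0, measure_ne_top μ _⟩]
  exact le_iInf h

theorem QuasiErgodic.ae_forall_mem_of_shift {T : α → α} (hT : QuasiErgodic T μ)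
    {s : ℤ → Set α} (hs : ∀ i, NullMeasurableSet (s i) μ)
    (hshift : ∀ᵐ x ∂μ, ∀ i, T x ∈ s i ↔ x ∈ s (i + 1)) (hpos : μ (⋂ i, s i) ≠ 0) :
    ∀ᵐ x ∂μ, ∀ i, x ∈ s i := by
  have hinv : T ⁻¹' (⋂ i, s i) =ᵐ[μ] ⋂ i, s i := by
    refine eventuallyEq_set.2 (hshift.mono fun x hx => ?_)
    simp only [Set.mem_preimage, Set.mem_iInter, hx]
    exact ⟨fun h i => by simpa using h (i - 1), fun h i => h (i + 1)⟩
  simpa only [Set.mem_iInter] using (hT.ae_mem_or_ae_notMem₀ (.iInter hs) hinv).resolve_right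
    fun hnot => hpos (measure_eq_zero_iff_ae_notMem.2 hnot)

theorem Ergodic.ae_dist_comp_lt_of_le_measure [IsFiniteMeasure μ] {T S : α → α}
    (hT : Ergodic T μ) (hS : MeasurePreserving S μ μ)
    (hinv : ∀ᵐ x ∂μ, S (T x) = x ∧ T (S x) = x) {E : Type*} [PseudoMetricSpace E] {f : α → E}
    (hf : AEStronglyMeasurable f μ) {r : ENNReal} (hr : r ≠ 0) {δ : ℝ}
    (h : ∀ b : ℕ, r ≤ μ {x | ∀ i : ℤ, -(b : ℤ) ≤ i → i ≤ b →
      dist (f (intIterate T S i x)) (f (intIterate T S i (S x))) < δ}) :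
    ∀ᵐ x ∂μ, dist (f (T x)) (f x) < δ := by
  set s : ℤ → Set α := fun i =>
    {x | dist (f (intIterate T S i x)) (f (intIterate T S (i - 1) x)) < δ}
  have hf_iter (i : ℤ) : AEStronglyMeasurable (f ∘ intIterate T S i) μ :=
    hf.comp_quasiMeasurePreserving (hT.toMeasurePreserving.intIterate hS i).quasiMeasurePreserving
  have hs (i : ℤ) : NullMeasurableSet (s i) μ :=
    nullMeasurableSet_lt ((hf_iter i).dist (hf_iter (i - 1))).aemeasurable aemeasurable_const
  have hshift : ∀ᵐ x ∂μ, ∀ i, T x ∈ s i ↔ x ∈ s (i + 1) := hinv.mono fun x hx i => by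
    simp only [s, Set.mem_ofPred_eq, intIterate_apply_of_leftInverse hx.1, sub_add_cancel,
      add_sub_cancel_right]
  have hr_le (b : ℕ) : r ≤ μ {x | ∀ i : ℤ, -(b : ℤ) ≤ i → i ≤ b → x ∈ s i} := by
    refine (h b).trans_eq (measure_congr (eventuallyEq_set.2 (hinv.mono fun x hx => ?_)))
    simp only [s, Set.mem_ofPred_eq, intIterate_apply_of_rightInverse hx.2]
  have hpos : μ (⋂ i, s i) ≠ 0 :=
    ((pos_iff_ne_zero.2 hr).trans_le (le_measure_iInter_of_le_measure_Icc hs hr_le)).ne'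
  filter_upwards [hT.quasiErgodic.ae_forall_mem_of_shift hs hshift hpos] with x hx
  simpa [s, intIterate] using hx 1

theorem ae_constant_of_rigidity_along_orbit_general (T S : ℝ → ℝ)
    (hT : Ergodic T (volume.restrict (Set.Ico (0:ℝ) 1)))
    (hS : MeasurePreserving S (volume.restrict (Set.Ico (0:ℝ) 1))
      (volume.restrict (Set.Ico (0:ℝ) 1)))
    (hinv : ∀ x ∈ Set.Ico (0:ℝ) 1, S (T x) = x ∧ T (S x) = x)
    -- `iter i` is the `i`-th power of `T` for `i ∈ ℤ` (negative powers via `S = T⁻¹`)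
    (iter : ℤ → ℝ → ℝ)
    (hiter : ∀ (i : ℤ) (x : ℝ),
      iter i x = if 0 ≤ i then T^[i.toNat] x else S^[(-i).toNat] x)
    (f : ℝ → ℝ) (hf : MemLp f 2 (volume.restrict (Set.Ico (0:ℝ) 1)))
    (ρ : ℝ) (hρ : 0 < ρ)
    (h : ∀ δ : ℝ, 0 < δ → ∀ b : ℕ,
      ENNReal.ofReal ρ ≤ (volume.restrict (Set.Ico (0:ℝ) 1))
        {x | ∀ i : ℤ, -(b : ℤ) ≤ i → i ≤ (b : ℤ) →
          |f (iter i x) - f (iter i (S x))| < δ}) :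
    ∃ C : ℝ, f =ᵐ[volume.restrict (Set.Ico (0:ℝ) 1)] fun _ => C := by
  obtain rfl : iter = intIterate T S := by
    funext i x
    rw [hiter]
    unfold intIterate
    split_ifs <;> rfl
  simp_rw [← Real.dist_eq] at h
  refine hT.ae_eq_const_of_ae_eq_comp_ae hf.aestronglyMeasurable
    (ae_eq_of_forall_ae_dist_lt fun δ hδ => ?_)
  exact hT.ae_dist_comp_lt_of_le_measure hS ((ae_restrict_mem measurableSet_Ico).mono hinv)
    hf.aestronglyMeasurable (ENNReal.ofReal_pos.2 hρ).ne' (h δ hδ)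

/-- If for a fixed `ρ > 0`, for all `δ > 0` and `b ∈ ℕ`, the set
`{x : |f_i(x) - f_i(T⁻¹x)| < δ for all -b ≤ i ≤ b}` (where `f_l = f ∘ T^l`) has
Lebesgue measure at least `ρ`, and `T` is ergodic, then `f` is a.e. constant. -/
theorem ae_constant_of_rigidity_along_orbit (T S : ℝ → ℝ)
    (hmapsT : Set.MapsTo T (Set.Ico (0:ℝ) 1) (Set.Ico (0:ℝ) 1))
    (hmapsS : Set.MapsTo S (Set.Ico (0:ℝ) 1) (Set.Ico (0:ℝ) 1))
    (hT : Ergodic T (volume.restrict (Set.Ico (0:ℝ) 1)))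
    (hS : MeasurePreserving S (volume.restrict (Set.Ico (0:ℝ) 1))
      (volume.restrict (Set.Ico (0:ℝ) 1)))
    (hinv : ∀ x ∈ Set.Ico (0:ℝ) 1, S (T x) = x ∧ T (S x) = x)
    -- `iter i` is the `i`-th power of `T` for `i ∈ ℤ` (negative powers via `S = T⁻¹`)
    (iter : ℤ → ℝ → ℝ)
    (hiter : ∀ (i : ℤ) (x : ℝ),
      iter i x = if 0 ≤ i then T^[i.toNat] x else S^[(-i).toNat] x)
    (f : ℝ → ℝ) (hf : MemLp f 2 (volume.restrict (Set.Ico (0:ℝ) 1)))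
    (ρ : ℝ) (hρ : 0 < ρ)
    (h : ∀ δ : ℝ, 0 < δ → ∀ b : ℕ,
      ENNReal.ofReal ρ ≤ (volume.restrict (Set.Ico (0:ℝ) 1))
        {x | ∀ i : ℤ, -(b : ℤ) ≤ i → i ≤ (b : ℤ) →
          |f (iter i x) - f (iter i (S x))| < δ}) :
    ∃ C : ℝ, f =ᵐ[volume.restrict (Set.Ico (0:ℝ) 1)] fun _ => C :=
  ae_constant_of_rigidity_along_orbit_general T S hT hS hinv iter hiter f hf ρ hρ h
end

section
/- Let T be the interval exchange transformation determined by (λ, π) and σ the associated auxiliary permutation on {0,...,d}. Writing ω_0 = 0, ω_i = λ_1 + ... + λ_i for 1 ≤ i ≤ d (so ω_d = 1), and T_+(a) = lim_{x→a+} T(x), T_-(a) = lim_{x→a-} T(x): if σ(j) = k with ω_j ≠ 0 and ω_k ≠ 1 (i.e. the third case of the definition of σ applies, with j ≥ 1 and π(j) ≠ d), then T_-(ω_j) = T_+(ω_k). -/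
/-!
On `[ω_{i-1}, ω_i)` the map `T` is the translation `x ↦ x - ω_{i-1} + S_i`, where `S_i` is the
total length of the intervals that `π` places before the `i`-th one. Hence
`T_-(ω_j) = λ_j + S_j` and `T_+(ω_{m-1}) = S_m`. For `m = π⁻¹(π(j) + 1)` the intervals placed
before the `m`-th are exactly those placed before the `j`-th together with the `j`-th itself,
so `S_m = λ_j + S_j`.
-/

open Finset Filter Topology

theorem tendsto_nhdsGT_of_eqOn_Ico_add {f : ℝ → ℝ} {a b c : ℝ} (hab : a < b)
    (hf : Set.EqOn f (· + c) (Set.Ico a b)) : Tendsto f (𝓝[>] a) (𝓝 (a + c)) :=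
  ((continuous_add_const c).tendsto a).mono_left nhdsWithin_le_nhds
    |>.congr' (eventuallyEq_of_mem (Ico_mem_nhdsGT hab) hf).symm

theorem tendsto_nhdsLT_of_eqOn_Ico_add {f : ℝ → ℝ} {a b c : ℝ} (hab : a < b)
    (hf : Set.EqOn f (· + c) (Set.Ico a b)) : Tendsto f (𝓝[<] b) (𝓝 (b + c)) :=
  ((continuous_add_const c).tendsto b).mono_left nhdsWithin_le_nhds
    |>.congr' (eventuallyEq_of_mem (Ioo_mem_nhdsLT hab) (hf.mono Set.Ioo_subset_Ico_self)).symm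

theorem Finset.sum_filter_lt_add_one {ι M : Type*} [AddCommMonoid M] {s : Finset ι}
    {π : ι → ℕ} (hπ : Set.InjOn π s) {j : ι} (hj : j ∈ s) (f : ι → M) :
    ∑ i ∈ s.filter (fun i => π i < π j + 1), f i = f j + ∑ i ∈ s.filter (fun i => π i < π j), f i := by
  classical
  have hsplit : s.filter (fun i => π i < π j + 1) = insert j (s.filter (fun i => π i < π j)) := by
    ext i
    simp only [mem_filter, mem_insert, Nat.lt_succ_iff_lt_or_eq]
    constructor
    · rintro ⟨hi, hlt | heq⟩
      exacts [Or.inr ⟨hi, hlt⟩, Or.inl (hπ hi hj heq)]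
    · rintro (rfl | ⟨hi, hlt⟩)
      exacts [⟨hj, Or.inr rfl⟩, ⟨hi, Or.inl hlt⟩]
  rw [hsplit, sum_insert (by simp)]

theorem aux_permutation_limit_identification_general (d : ℕ)
    (π πinv : ℕ → ℕ)
    (hπ : ∀ j, 1 ≤ j → j ≤ d → 1 ≤ π j ∧ π j ≤ d)
    (hπinv : ∀ j, 1 ≤ j → j ≤ d → 1 ≤ πinv j ∧ πinv j ≤ d)
    (hleft : ∀ j, 1 ≤ j → j ≤ d → πinv (π j) = j)
    (hright : ∀ j, 1 ≤ j → j ≤ d → π (πinv j) = j)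
    (lam : ℕ → ℝ) (hpos : ∀ i, 1 ≤ i → i ≤ d → 0 < lam i)
    -- `ω i = λ₁ + ⋯ + λ_i`, so `ω 0 = 0` and `ω d = 1`
    (ω : ℕ → ℝ) (hω : ∀ i, ω i = ∑ j ∈ Finset.Icc 1 i, lam j)
    (T : ℝ → ℝ)
    (hT : ∀ i, 1 ≤ i → i ≤ d → ∀ x ∈ Set.Ico (ω (i - 1)) (ω i),
      T x = x - ω (i - 1) + ∑ j ∈ (Finset.Icc 1 d).filter (fun j => π j < π i), lam j)
    (j k : ℕ) (hj1 : 1 ≤ j) (hjd : j ≤ d) (hπj : π j ≠ d)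
    (hk : k = πinv (π j + 1) - 1) :
    ∃ L : ℝ,
      Filter.Tendsto T (nhdsWithin (ω j) (Set.Iio (ω j))) (nhds L) ∧
      Filter.Tendsto T (nhdsWithin (ω k) (Set.Ioi (ω k))) (nhds L) := by
  set S : ℕ → ℝ := fun i => ∑ l ∈ (Icc 1 d).filter (fun l => π l < π i), lam l with hS
  have hpiece : ∀ i, 1 ≤ i → i ≤ d →
      Set.EqOn T (· + (S i - ω (i - 1))) (Set.Ico (ω (i - 1)) (ω i)) :=
    fun i hi1 hid x hx => by rw [hT i hi1 hid x hx]; ring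
  have hωsucc : ∀ i, ω (i + 1) = ω i + lam (i + 1) := fun i => by
    rw [hω, hω, sum_Icc_succ_top (by omega)]
  have hsucc_le : π j + 1 ≤ d := by have := (hπ j hj1 hjd).2; omega
  obtain ⟨hm1, hmd⟩ := hπinv (π j + 1) (by omega) hsucc_le
  have hkd : k + 1 ≤ d := by omega
  have hπk : π (k + 1) = π j + 1 := by
    rw [hk, Nat.sub_add_cancel hm1]; exact hright _ (by omega) hsucc_le
  have hSk : S (k + 1) = lam j + S j := by
    simp only [hS, hπk]
    have hinj : Set.InjOn π (Icc 1 d : Finset ℕ) :=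
      Set.LeftInvOn.injOn (f₁' := πinv) fun a ha => by
        rw [coe_Icc, Set.mem_Icc] at ha; exact hleft a ha.1 ha.2
    exact sum_filter_lt_add_one hinj (by simp [hj1, hjd]) lam
  have hωj : ω j = ω (j - 1) + lam j := by
    simpa [Nat.sub_add_cancel hj1] using hωsucc (j - 1)
  refine ⟨ω j + (S j - ω (j - 1)),
    tendsto_nhdsLT_of_eqOn_Ico_add (by linarith [hpos j hj1 hjd]) (hpiece j hj1 hjd), ?_⟩
  have hright_limit := tendsto_nhdsGT_of_eqOn_Ico_add (a := ω k) (b := ω (k + 1))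
    (by linarith [hωsucc k, hpos (k + 1) (by omega) hkd])
    (by simpa only [Nat.add_sub_cancel] using hpiece (k + 1) (by omega) hkd)
  convert hright_limit using 2
  linarith

/-- For an interval exchange transformation `T` with auxiliary permutation `σ`:
if `σ(j) = k` via the third case of the definition (`j ≥ 1`, `π(j) ≠ d`,
`k = π⁻¹(π(j)+1) - 1`), then the left limit of `T` at `ω_j` equals the right limit
of `T` at `ω_k`. -/
theorem aux_permutation_limit_identification (d : ℕ) (hd : 1 ≤ d)
    (π πinv : ℕ → ℕ)
    (hπ : ∀ j, 1 ≤ j → j ≤ d → 1 ≤ π j ∧ π j ≤ d)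
    (hπinv : ∀ j, 1 ≤ j → j ≤ d → 1 ≤ πinv j ∧ πinv j ≤ d)
    (hleft : ∀ j, 1 ≤ j → j ≤ d → πinv (π j) = j)
    (hright : ∀ j, 1 ≤ j → j ≤ d → π (πinv j) = j)
    (lam : ℕ → ℝ) (hpos : ∀ i, 1 ≤ i → i ≤ d → 0 < lam i)
    (hsum : ∑ i ∈ Finset.Icc 1 d, lam i = 1)
    -- `ω i = λ₁ + ⋯ + λ_i`, so `ω 0 = 0` and `ω d = 1`
    (ω : ℕ → ℝ) (hω : ∀ i, ω i = ∑ j ∈ Finset.Icc 1 i, lam j)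
    (T : ℝ → ℝ)
    (hT : ∀ i, 1 ≤ i → i ≤ d → ∀ x ∈ Set.Ico (ω (i - 1)) (ω i),
      T x = x - ω (i - 1) + ∑ j ∈ (Finset.Icc 1 d).filter (fun j => π j < π i), lam j)
    (j k : ℕ) (hj1 : 1 ≤ j) (hjd : j ≤ d) (hπj : π j ≠ d)
    (hk : k = πinv (π j + 1) - 1) :
    ∃ L : ℝ,
      Filter.Tendsto T (nhdsWithin (ω j) (Set.Iio (ω j))) (nhds L) ∧
      Filter.Tendsto T (nhdsWithin (ω k) (Set.Ioi (ω k))) (nhds L) :=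
  aux_permutation_limit_identification_general d π πinv hπ hπinv hleft hright lam hpos ω hω T hT j k
    hj1 hjd hπj hk
end
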